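/- arXiv:2312.10506 — 6 statements merged into one kernel-verified Lean document; each statement's English description precedes it below -/
import Mathlib

section
/- Let A be a Hurwitz d×d real matrix and x₀ ∈ ℝ^d, x₀ ≠ 0. For every pair of numbers 0 ≤ t₁ < t₂, the linear span of the arc Γ(t₁,t₂) = {e^{tA}x₀ : t ∈ [t₁,t₂]} coincides with L_{x₀}, the minimal A-invariant subspace of ℝ^d containing x₀. -/
open Matrix Set Filter Topology

noncomputable section

/-- A real square matrix is *Hurwitz* if all its (complex) eigenvalues,
i.e. the roots of its characteristic polynomial over `ℂ`, have negative real part. -/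
def IsHurwitz {d : ℕ} (A : Matrix (Fin d) (Fin d) ℝ) : Prop :=
  ∀ μ : ℂ, (A.map (algebraMap ℝ ℂ)).charpoly.IsRoot μ → μ.re < 0

/-- The trajectory `x(t) = e^{tA} x₀` of the linear system `ẋ = Ax`. -/
def traj {d : ℕ} (A : Matrix (Fin d) (Fin d) ℝ) (x₀ : Fin d → ℝ) (t : ℝ) : Fin d → ℝ :=
  (NormedSpace.exp (t • A)).mulVec x₀

/-- Symmetrized convex hull `co_s X = co (X ∪ (−X))`. -/
def symCo {d : ℕ} (X : Set (Fin d → ℝ)) : Set (Fin d → ℝ) :=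
  convexHull ℝ (X ∪ (-X))

/-- `G = co_s {x(t) : t ≥ 0}`, the symmetrized convex hull of the whole trajectory. -/
def trajHull {d : ℕ} (A : Matrix (Fin d) (Fin d) ℝ) (x₀ : Fin d → ℝ) : Set (Fin d → ℝ) :=
  symCo (traj A x₀ '' Ici (0:ℝ))

/-- `T > 0` is a *cut tail point* of the trajectory starting at `x₀` if `x(t)` lies in the
relative (intrinsic) interior of `G` for every `t ≥ T`. -/
def IsCutTailPoint {d : ℕ} (A : Matrix (Fin d) (Fin d) ℝ) (x₀ : Fin d → ℝ) (T : ℝ) : Prop :=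
  0 < T ∧ ∀ t, T ≤ t → traj A x₀ t ∈ intrinsicInterior ℝ (trajHull A x₀)

/-- `T_cut(x₀)`: the infimum of all cut tail points of the trajectory starting at `x₀`. -/
def Tcut {d : ℕ} (A : Matrix (Fin d) (Fin d) ℝ) (x₀ : Fin d → ℝ) : ℝ :=
  sInf {T | IsCutTailPoint A x₀ T}

/-- `L_{x₀}`: the minimal `A`-invariant linear subspace of `ℝ^d` containing `x₀`. -/
def minInv {d : ℕ} (A : Matrix (Fin d) (Fin d) ℝ) (x₀ : Fin d → ℝ) : Submodule ℝ (Fin d → ℝ) :=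
  sInf {L | x₀ ∈ L ∧ ∀ v ∈ L, A.mulVec v ∈ L}

/-- A point `x₀` is *generic* if `dim L_{x₀}` equals the degree of the minimal polynomial of `A`. -/
def IsGeneric {d : ℕ} (A : Matrix (Fin d) (Fin d) ℝ) (x₀ : Fin d → ℝ) : Prop :=
  Module.finrank ℝ (minInv A x₀) = (minpoly ℝ A).natDegree

/-!
The span `S` of the arc is finite-dimensional, hence closed, so it contains the limits of the
difference quotients of the trajectory inside the arc: the derivatives `A x(t)`, `t ∈ [t₁, t₂]`.
Thus `S` is `A`-invariant. The matrices leaving a subspace invariant form a closed subalgebra,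
which is therefore closed under `exp`; so every `A`-invariant subspace is `e^{tA}`-invariant for
all real `t`. Hence `x₀ = e^{-t₁A} x(t₁) ∈ S`, giving `L_{x₀} ≤ S`, and conversely every
`x(t) = e^{tA} x₀` lies in `L_{x₀}`.
-/

namespace Submodule

variable {n R 𝕜 : Type*} [Fintype n] [DecidableEq n] [CommSemiring R] [RCLike 𝕜]

def matrixStabilizer (L : Submodule R (n → R)) : Subalgebra R (Matrix n n R) where
  carrier := {M | ∀ v ∈ L, M *ᵥ v ∈ L}
  mul_mem' hM hN v hv := by
    rw [← mulVec_mulVec]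
    exact hM _ (hN v hv)
  one_mem' v hv := by rwa [one_mulVec]
  add_mem' hM hN v hv := by
    rw [add_mulVec]
    exact L.add_mem (hM v hv) (hN v hv)
  zero_mem' v _ := by
    rw [zero_mulVec]
    exact L.zero_mem
  algebraMap_mem' c v hv := by
    rw [Algebra.algebraMap_eq_smul_one, smul_mulVec, one_mulVec]
    exact L.smul_mem c hv

theorem mem_matrixStabilizer {L : Submodule R (n → R)} {M : Matrix n n R} :
    M ∈ L.matrixStabilizer ↔ ∀ v ∈ L, M *ᵥ v ∈ L :=
  Iff.rfl

theorem mem_matrixStabilizer_span {s : Set (n → R)} {M : Matrix n n R} :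
    M ∈ (span R s).matrixStabilizer ↔ ∀ v ∈ s, M *ᵥ v ∈ span R s := by
  refine ⟨fun hM v hv => hM v (subset_span hv), fun hM => ?_⟩
  have : span R s ≤ (span R s).comap M.mulVecLin := span_le.2 hM
  exact fun v hv => this hv

theorem isClosed_matrixStabilizer (L : Submodule 𝕜 (n → 𝕜)) :
    IsClosed (L.matrixStabilizer : Set (Matrix n n 𝕜)) := by
  have : (L.matrixStabilizer : Set (Matrix n n 𝕜)) = ⋂ v ∈ L, (· *ᵥ v) ⁻¹' L := by
    ext M
    simp [mem_matrixStabilizer]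
  rw [this]
  exact isClosed_biInter fun v _ =>
    L.closed_of_finiteDimensional.preimage (Continuous.matrix_mulVec continuous_id continuous_const)

theorem exp_mem_matrixStabilizer {L : Submodule 𝕜 (n → 𝕜)} {M : Matrix n n 𝕜}
    (hM : M ∈ L.matrixStabilizer) : NormedSpace.exp M ∈ L.matrixStabilizer :=
  NormedSpace.exp_mem L.isClosed_matrixStabilizer hM

end Submodule

section Trajectory

variable {d : ℕ} (A : Matrix (Fin d) (Fin d) ℝ) (x₀ : Fin d → ℝ)

theorem traj_zero : traj A x₀ 0 = x₀ := by
  simp [traj]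

theorem traj_traj (s t : ℝ) : traj A (traj A x₀ t) s = traj A x₀ (s + t) := by
  rw [traj, traj, traj, mulVec_mulVec, add_smul,
    Matrix.exp_add_of_commute _ _ ((Commute.refl A).smul_left s |>.smul_right t)]

open scoped Norms.Operator in
theorem traj_hasDerivAt (t : ℝ) : HasDerivAt (traj A x₀) (A *ᵥ traj A x₀ t) t := by
  have hexp := hasDerivAt_exp_smul_const' (𝕂 := ℝ) A t
  have happly := (LinearMap.toContinuousLinearMap ((mulVecBilin ℝ ℝ).flip x₀)).hasFDerivAt
    (x := NormedSpace.exp (t • A))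
  exact (happly.comp_hasDerivAt t hexp).congr_deriv (mulVec_mulVec x₀ A _).symm

variable {A x₀}

theorem traj_mem {L : Submodule ℝ (Fin d → ℝ)} (hx₀ : x₀ ∈ L) (hA : A ∈ L.matrixStabilizer)
    (t : ℝ) : traj A x₀ t ∈ L :=
  Submodule.exp_mem_matrixStabilizer (Subalgebra.smul_mem _ hA t) x₀ hx₀

theorem mulVec_traj_mem_span_arc {t₁ t₂ : ℝ} (ht : t₁ < t₂) {s : ℝ} (hs : s ∈ Icc t₁ t₂) :
    A *ᵥ traj A x₀ s ∈ Submodule.span ℝ (traj A x₀ '' Icc t₁ t₂) := by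
  have hderiv : derivWithin (traj A x₀) (Icc t₁ t₂) s = A *ᵥ traj A x₀ s :=
    (traj_hasDerivAt A x₀ s).hasDerivWithinAt.derivWithin (uniqueDiffOn_Icc ht s hs)
  have := range_derivWithin_subset_closure_span_image (traj A x₀) (s := Icc t₁ t₂)
    (t := Icc t₁ t₂) (by rw [inter_self]; exact subset_closure) ⟨s, hderiv⟩
  rwa [(Submodule.closed_of_finiteDimensional _).closure_eq] at this

end Trajectory

section MinInv

variable {d : ℕ} {A : Matrix (Fin d) (Fin d) ℝ} {x₀ : Fin d → ℝ}

theorem mem_minInv_self : x₀ ∈ minInv A x₀ :=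
  Submodule.mem_sInf.2 fun _ hL => hL.1

theorem mem_matrixStabilizer_minInv : A ∈ (minInv A x₀).matrixStabilizer := fun v hv =>
  Submodule.mem_sInf.2 fun L hL => hL.2 v (Submodule.mem_sInf.1 hv L hL)

theorem minInv_le {L : Submodule ℝ (Fin d → ℝ)} (hx₀ : x₀ ∈ L) (hA : A ∈ L.matrixStabilizer) :
    minInv A x₀ ≤ L :=
  sInf_le ⟨hx₀, hA⟩

end MinInv

theorem span_arc_eq_minInv_general {d : ℕ} (A : Matrix (Fin d) (Fin d) ℝ)
    (x₀ : Fin d → ℝ) (t₁ t₂ : ℝ) (ht : t₁ < t₂) :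
    Submodule.span ℝ (traj A x₀ '' Icc t₁ t₂) = minInv A x₀ := by
  set S := Submodule.span ℝ (traj A x₀ '' Icc t₁ t₂)
  have hA : A ∈ S.matrixStabilizer := Submodule.mem_matrixStabilizer_span.2 <| by
    rintro _ ⟨s, hs, rfl⟩
    exact mulVec_traj_mem_span_arc ht hs
  have hx₀ : x₀ ∈ S := by
    have h₁ : traj A x₀ t₁ ∈ S := Submodule.subset_span ⟨t₁, left_mem_Icc.2 ht.le, rfl⟩
    simpa [traj_traj, traj_zero] using traj_mem h₁ hA (-t₁)
  refine le_antisymm (Submodule.span_le.2 ?_) (minInv_le hx₀ hA)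
  rintro _ ⟨s, -, rfl⟩
  exact traj_mem mem_minInv_self mem_matrixStabilizer_minInv s

/-- For a Hurwitz matrix `A` and `x₀ ≠ 0`, the linear span of any arc
`Γ(t₁,t₂) = {e^{tA}x₀ : t ∈ [t₁,t₂]}` with `0 ≤ t₁ < t₂` coincides with `L_{x₀}`. -/
theorem span_arc_eq_minInv {d : ℕ} (A : Matrix (Fin d) (Fin d) ℝ) (hA : IsHurwitz A)
    (x₀ : Fin d → ℝ) (hx₀ : x₀ ≠ 0) (t₁ t₂ : ℝ) (ht₁ : 0 ≤ t₁) (ht : t₁ < t₂) :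
    Submodule.span ℝ (traj A x₀ '' Icc t₁ t₂) = minInv A x₀ :=
  span_arc_eq_minInv_general A x₀ t₁ t₂ ht
end
end

section
/- Let A be a Hurwitz d×d real matrix and x₀ ∈ ℝ^d. Then the trajectory x(t) = e^{tA}x₀ possesses a cut tail point: there exists T > 0 such that x(t) lies in the relative interior of G = co_s {x(s) : s ≥ 0} for every t ≥ T. -/
open Matrix Set Filter Topology

noncomputable section

/-!
On the complex generalized eigenspace of each eigenvalue `μ` of `A`, `e^{tA}` acts as `e^{tμ}`
times a polynomial in `t`; as `A` is Hurwitz, `x(t) → 0`. The hull `G` is convex and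
symmetric: with a relative interior point `x` it also has `-x` in its relative interior, and
averaging the two relative neighbourhoods shows that `0` is a relative interior point of `G`.
The relative interior being relatively open, the tail of the trajectory, which lies in `G`,
eventually stays in it.
-/

theorem tendsto_pow_mul_cexp_mul_atTop_nhds_zero {μ : ℂ} (hμ : μ.re < 0) (j : ℕ) :
    Tendsto (fun t : ℝ => (t : ℂ) ^ j * Complex.exp (t * μ)) atTop (𝓝 0) := by
  rw [tendsto_zero_iff_norm_tendsto_zero]
  refine (tendsto_rpow_mul_exp_neg_mul_atTop_nhds_zero j (-μ.re) (by linarith)).congr' ?_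
  filter_upwards [eventually_ge_atTop 0] with t ht
  simp [Complex.norm_exp, abs_of_nonneg ht, mul_comm]

section MatrixExp

variable {n : Type*} [Fintype n] [DecidableEq n]

theorem exp_smul_mulVec_of_pow_mulVec_eq_zero {N : Matrix n n ℂ} {v : n → ℂ} {k : ℕ}
    (hv : N ^ k *ᵥ v = 0) (s : ℂ) :
    NormedSpace.exp (s • N) *ᵥ v =
      ∑ j ∈ Finset.range k, (s ^ j * (j.factorial : ℂ)⁻¹) • (N ^ j *ᵥ v) := by
  let : NormedRing (Matrix n n ℂ) := Matrix.linftyOpNormedRing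
  let : NormedAlgebra ℂ (Matrix n n ℂ) := Matrix.linftyOpNormedAlgebra
  refine ((NormedSpace.exp_series_hasSum_exp' (𝕂 := ℂ) (s • N)).map
    (mulVec.addMonoidHomLeft v) (continuous_id.matrix_mulVec continuous_const)).unique ?_
  have hterm (j : ℕ) : ((j.factorial : ℂ)⁻¹ • (s • N) ^ j) *ᵥ v =
      (s ^ j * (j.factorial : ℂ)⁻¹) • (N ^ j *ᵥ v) := by
    rw [smul_pow, smul_smul, smul_mulVec, mul_comm]
  show HasSum (fun j : ℕ => ((j.factorial : ℂ)⁻¹ • (s • N) ^ j) *ᵥ v) _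
  simp only [hterm]
  refine hasSum_sum_of_ne_finset_zero fun j hj => ?_
  obtain ⟨i, rfl⟩ := Nat.exists_eq_add_of_le' (not_lt.1 (Finset.mem_range.not.1 hj))
  rw [pow_add N, ← mulVec_mulVec, hv, mulVec_zero, smul_zero]

theorem exp_smul_one_eq_cexp_smul_one (c : ℂ) :
    NormedSpace.exp (c • (1 : Matrix n n ℂ)) = Complex.exp c • 1 := by
  rw [smul_one_eq_diagonal, exp_diagonal, smul_one_eq_diagonal]
  congr 1
  ext
  simp [Complex.exp_eq_exp_ℂ]

theorem tendsto_exp_smul_mulVec_of_pow_sub_mulVec_eq_zero {B : Matrix n n ℂ} {μ : ℂ}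
    (hμ : μ.re < 0) {v : n → ℂ} {k : ℕ} (hv : (B - μ • 1) ^ k *ᵥ v = 0) :
    Tendsto (fun t : ℝ => NormedSpace.exp (t • B) *ᵥ v) atTop (𝓝 0) := by
  have hsplit (t : ℝ) : t • B = ((t : ℂ) * μ) • 1 + (t : ℂ) • (B - μ • 1) := by
    rw [smul_sub, smul_smul, Complex.coe_smul]; abel
  have hexp (t : ℝ) : NormedSpace.exp (t • B) *ᵥ v = ∑ j ∈ Finset.range k,
      ((t : ℂ) ^ j * Complex.exp (t * μ)) • ((j.factorial : ℂ)⁻¹ • ((B - μ • 1) ^ j *ᵥ v)) := by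
    rw [hsplit, exp_add_of_commute _ _ ((Commute.one_left _).smul_left _ |>.smul_right _),
      exp_smul_one_eq_cexp_smul_one, smul_mul_assoc, one_mul, smul_mulVec,
      exp_smul_mulVec_of_pow_mulVec_eq_zero hv, Finset.smul_sum]
    refine Finset.sum_congr rfl fun j _ => ?_
    rw [smul_smul, smul_smul]
    congr 1
    ring
  simpa [hexp] using tendsto_finsetSum (Finset.range k) fun j _ =>
    (tendsto_pow_mul_cexp_mul_atTop_nhds_zero hμ j).smul_const
      ((j.factorial : ℂ)⁻¹ • ((B - μ • 1) ^ j *ᵥ v))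

theorem tendsto_exp_smul_mulVec_atTop_nhds_zero {B : Matrix n n ℂ}
    (hB : ∀ μ, B.charpoly.IsRoot μ → μ.re < 0) (z : n → ℂ) :
    Tendsto (fun t : ℝ => NormedSpace.exp (t • B) *ᵥ z) atTop (𝓝 0) := by
  let f : Module.End ℂ (n → ℂ) := toLinAlgEquiv' B
  have hz : z ∈ ⨆ μ, f.maxGenEigenspace μ := by
    rw [Module.End.iSup_maxGenEigenspace_eq_top]; trivial
  refine Submodule.iSup_induction _ hz
    (motive := fun w => Tendsto (fun t : ℝ => NormedSpace.exp (t • B) *ᵥ w) atTop (𝓝 0))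
    (fun μ v hv => ?_) (by simp) fun x y hx hy => by simpa [mulVec_add] using hx.add hy
  obtain rfl | hv0 := eq_or_ne v 0
  · simp
  have hμ : f.HasEigenvalue μ :=
    (show f.HasUnifEigenvalue μ ⊤ from (Submodule.ne_bot_iff _).2 ⟨v, hv, hv0⟩).lt zero_lt_one
  rw [Module.End.hasEigenvalue_iff_isRoot_charpoly, show f.charpoly = B.charpoly from
    charpoly_toLin' B] at hμ
  obtain ⟨k, hk⟩ := (Module.End.mem_maxGenEigenspace _ _ _).1 hv
  refine tendsto_exp_smul_mulVec_of_pow_sub_mulVec_eq_zero (hB μ hμ) (k := k) ?_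
  have hpow : (f - μ • 1) ^ k = toLinAlgEquiv' ((B - μ • 1) ^ k) := by simp [f]
  rwa [hpow, toLinAlgEquiv'_apply] at hk

theorem map_exp_smul_algebraMap (A : Matrix n n ℝ) (t : ℝ) :
    (NormedSpace.exp (t • A)).map (algebraMap ℝ ℂ) =
      NormedSpace.exp (t • A.map (algebraMap ℝ ℂ)) := by
  let : NormedRing (Matrix n n ℝ) := Matrix.linftyOpNormedRing
  let : NormedAlgebra ℝ (Matrix n n ℝ) := Matrix.linftyOpNormedAlgebra
  let : NormedAlgebra ℚ (Matrix n n ℝ) := Matrix.linftyOpNormedAlgebra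
  let : NormedRing (Matrix n n ℂ) := Matrix.linftyOpNormedRing
  have h := NormedSpace.map_exp ((Algebra.ofId ℝ ℂ).mapMatrix (m := n))
    (continuous_id.matrix_map (continuous_algebraMap ℝ ℂ)) (t • A)
  rwa [map_smul] at h

theorem tendsto_exp_smul_mulVec_atTop_nhds_zero_real {A : Matrix n n ℝ}
    (hA : ∀ μ : ℂ, (A.map (algebraMap ℝ ℂ)).charpoly.IsRoot μ → μ.re < 0) (x : n → ℝ) :
    Tendsto (fun t : ℝ => NormedSpace.exp (t • A) *ᵥ x) atTop (𝓝 0) := by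
  have hre (t : ℝ) : NormedSpace.exp (t • A) *ᵥ x = fun i =>
      ((NormedSpace.exp (t • A.map (algebraMap ℝ ℂ)) *ᵥ (algebraMap ℝ ℂ ∘ x)) i).re := by
    ext i
    rw [← map_exp_smul_algebraMap, ← RingHom.map_mulVec, Complex.coe_algebraMap,
      Complex.ofReal_re]
  have hcont : Continuous fun w : n → ℂ => fun i => (w i).re := by fun_prop
  rw [funext hre]
  exact (hcont.tendsto 0).comp (tendsto_exp_smul_mulVec_atTop_nhds_zero hA _)

end MatrixExp

section IntrinsicInterior

variable {𝕜 V P : Type*} [Ring 𝕜] [AddCommGroup V] [Module 𝕜 V] [TopologicalSpace P]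
  [AddTorsor V P] {s : Set P} {x : P}

theorem mem_intrinsicInterior_iff_eventually :
    x ∈ intrinsicInterior 𝕜 s ↔
      x ∈ affineSpan 𝕜 s ∧ ∀ᶠ y in 𝓝[affineSpan 𝕜 s] x, y ∈ s := by
  rw [mem_intrinsicInterior]
  constructor
  · rintro ⟨y, hy, rfl⟩
    exact ⟨y.2, mem_of_superset (mem_nhds_subtype_iff_nhdsWithin.1
      (mem_interior_iff_mem_nhds.1 hy)) (image_preimage_subset _ _)⟩
  · rintro ⟨hx, h⟩
    refine ⟨⟨x, hx⟩, mem_interior_iff_mem_nhds.2 (mem_nhds_subtype_iff_nhdsWithin.2 ?_), rfl⟩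
    exact mem_of_superset (inter_mem h self_mem_nhdsWithin) fun y hy => ⟨⟨y, hy.2⟩, hy.1, rfl⟩

theorem eventually_nhdsWithin_mem_intrinsicInterior (hx : x ∈ intrinsicInterior 𝕜 s) :
    ∀ᶠ y in 𝓝[affineSpan 𝕜 s] x, y ∈ intrinsicInterior 𝕜 s := by
  obtain ⟨-, h⟩ := mem_intrinsicInterior_iff_eventually.1 hx
  filter_upwards [eventually_eventually_nhdsWithin.2 h, self_mem_nhdsWithin] with y hy hy'
  exact mem_intrinsicInterior_iff_eventually.2 ⟨hy', hy⟩

end IntrinsicInterior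

theorem neg_mem_convexHull_union_neg {E : Type*} [AddCommGroup E] [Module ℝ E] {X : Set E}
    {x : E} (hx : x ∈ convexHull ℝ (X ∪ -X)) : -x ∈ convexHull ℝ (X ∪ -X) := by
  rwa [← Set.mem_neg, ← convexHull_neg, Set.union_neg, neg_neg, Set.union_comm]

theorem zero_mem_intrinsicInterior_of_neg_mem {E : Type*} [NormedAddCommGroup E]
    [NormedSpace ℝ E] [FiniteDimensional ℝ E] {s : Set E} (hconv : Convex ℝ s)
    (hneg : ∀ x ∈ s, -x ∈ s) (hne : s.Nonempty) : (0 : E) ∈ intrinsicInterior ℝ s := by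
  obtain ⟨x, hx⟩ := hne.intrinsicInterior hconv
  have hx' : -x ∈ intrinsicInterior ℝ s := by
    let φ : E →ᵃⁱ[ℝ] E := (LinearIsometryEquiv.neg ℝ).toLinearIsometry.toAffineIsometry
    have hφ : φ '' s = s := Set.ext fun y =>
      ⟨by rintro ⟨z, hz, rfl⟩; exact hneg z hz, fun hy => ⟨-y, hneg y hy, neg_neg y⟩⟩
    rw [← hφ, AffineIsometry.intrinsicInterior_image]
    exact ⟨x, hx, rfl⟩
  rw [mem_intrinsicInterior_iff_eventually] at hx hx' ⊢
  have h0 : (0 : E) ∈ affineSpan ℝ s := by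
    simpa using (affineSpan ℝ s).convex hx.1 hx'.1 (by norm_num : (0 : ℝ) ≤ 1 / 2)
      (by norm_num : (0 : ℝ) ≤ 1 / 2) (by norm_num)
  have htrans {z : E} (hz : z ∈ affineSpan ℝ s) :
      Tendsto (z + ·) (𝓝[affineSpan ℝ s] 0) (𝓝[affineSpan ℝ s] z) := by
    refine tendsto_nhdsWithin_iff.2 ⟨?_, ?_⟩
    · exact ((continuous_const_add z).tendsto' 0 z (add_zero z)).mono_left nhdsWithin_le_nhds
    · filter_upwards [self_mem_nhdsWithin] with y hy
      simpa using AffineSubspace.vadd_mem_of_mem_direction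
        (AffineSubspace.vsub_mem_direction hz h0) hy
  refine ⟨h0, ?_⟩
  filter_upwards [(htrans hx.1).eventually hx.2, (htrans hx'.1).eventually hx'.2] with y h1 h2
  convert hconv h1 h2 (by norm_num : (0 : ℝ) ≤ 1 / 2) (by norm_num : (0 : ℝ) ≤ 1 / 2)
    (by norm_num) using 1
  module

/-- Every trajectory of a stable (Hurwitz) system possesses a cut tail point. -/
theorem exists_cutTailPoint {d : ℕ} (A : Matrix (Fin d) (Fin d) ℝ) (hA : IsHurwitz A)
    (x₀ : Fin d → ℝ) :
    ∃ T : ℝ, 0 < T ∧ ∀ t, T ≤ t → traj A x₀ t ∈ intrinsicInterior ℝ (trajHull A x₀) := by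
  have hmem : ∀ t, 0 ≤ t → traj A x₀ t ∈ trajHull A x₀ := fun t ht =>
    subset_convexHull ℝ _ (Or.inl ⟨t, ht, rfl⟩)
  have h0 : (0 : Fin d → ℝ) ∈ intrinsicInterior ℝ (trajHull A x₀) :=
    zero_mem_intrinsicInterior_of_neg_mem (convex_convexHull ℝ _)
      (fun _ => neg_mem_convexHull_union_neg) ⟨_, hmem 0 le_rfl⟩
  have htend : Tendsto (traj A x₀) atTop (𝓝[affineSpan ℝ (trajHull A x₀)] 0) :=
    tendsto_nhdsWithin_iff.2 ⟨tendsto_exp_smul_mulVec_atTop_nhds_zero_real hA x₀,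
      eventually_atTop.2 ⟨0, fun t ht => subset_affineSpan ℝ _ (hmem t ht)⟩⟩
  obtain ⟨T, hT⟩ :=
    eventually_atTop.1 (htend.eventually (eventually_nhdsWithin_mem_intrinsicInterior h0))
  exact ⟨max T 1, by positivity, fun t ht => hT t (le_of_max_le_left ht)⟩
end
end

section
/- (Proposition 2) Let A be a Hurwitz d×d real matrix and x₀ ∈ ℝ^d \ {0}. Then for every point y₀ ∈ L_{x₀} one has T_cut(y₀) ≤ T_cut(x₀). -/
open Matrix Set Filter Topology

noncomputable section

/-!
Every `y₀ ∈ L_{x₀}` is `B x₀` for a polynomial `B = p(A)`, which commutes with `e^{tA}`; so the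
trajectory of `y₀` is `B` applied to that of `x₀`, and its hull is `B '' G`. A linear map sends
the relative interior of a set into the relative interior of the image (between the affine spans
it is a surjective, hence open, map), so every cut tail point of `x₀` is one of `y₀`. Cut tail
points of `x₀` exist because `x(t) → 0` for Hurwitz `A` and `0` lies in the relative interior of
the symmetric convex set `G`; taking infima gives the inequality.
-/

section IntrinsicInterior

theorem Filter.Tendsto.eventually_mem_intrinsicInterior {𝕜 V P α : Type*} [Ring 𝕜]
    [AddCommGroup V] [Module 𝕜 V] [TopologicalSpace P] [AddTorsor V P] {s : Set P} {x : P}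
    {f : α → P} {l : Filter α} (hf : Tendsto f l (𝓝 x)) (hx : x ∈ intrinsicInterior 𝕜 s)
    (hfs : ∀ᶠ a in l, f a ∈ affineSpan 𝕜 s) : ∀ᶠ a in l, f a ∈ intrinsicInterior 𝕜 s := by
  obtain ⟨y, hy, rfl⟩ := hx
  obtain ⟨U, hU, hUs⟩ := (mem_nhds_subtype _ y _).1 (isOpen_interior.mem_nhds hy)
  filter_upwards [hf hU, hfs] with a haU has
  exact ⟨⟨f a, has⟩, hUs (show f a ∈ U from haU), rfl⟩

variable {V W P Q : Type*} [NormedAddCommGroup V] [NormedSpace ℝ V] [FiniteDimensional ℝ V]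
  [MetricSpace P] [NormedAddTorsor V P] [NormedAddCommGroup W] [NormedSpace ℝ W]
  [FiniteDimensional ℝ W] [MetricSpace Q] [NormedAddTorsor W Q]

/-- Restricted to the affine spans, `φ` is a surjective affine map between finite-dimensional
spaces, hence open. -/
theorem AffineMap.image_intrinsicInterior_subset (φ : P →ᵃ[ℝ] Q) (s : Set P) :
    φ '' intrinsicInterior ℝ s ⊆ intrinsicInterior ℝ (φ '' s) := by
  rcases s.eq_empty_or_nonempty with rfl | ⟨x, hx⟩
  · simp
  have : Nonempty (affineSpan ℝ s) := ⟨⟨x, subset_affineSpan ℝ s hx⟩⟩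
  have : Nonempty (affineSpan ℝ (φ '' s)) :=
    ⟨⟨φ x, subset_affineSpan ℝ _ (mem_image_of_mem φ hx)⟩⟩
  set ψ := φ.restrict (AffineSubspace.map_span φ s).le
  have hψ : IsOpenMap ψ := ψ.isOpenMap ψ.continuous_of_finiteDimensional
    (AffineMap.restrict.surjective φ (AffineSubspace.map_span φ s))
  rintro _ ⟨_, ⟨y, hy, rfl⟩, rfl⟩
  refine ⟨ψ y, interior_maximal ?_ (hψ _ isOpen_interior) (mem_image_of_mem ψ hy), rfl⟩
  rintro _ ⟨z, hz, rfl⟩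
  exact mem_image_of_mem φ (interior_subset (s := Subtype.val ⁻¹' s) hz)

/-- `a • x + b • y` is the image of `(x, y) ∈ s ×ˢ s` under a linear map sending `s ×ˢ s` onto
`s`, and the intrinsic interior of `s ×ˢ s` is `ri s ×ˢ ri s`. -/
protected theorem Convex.intrinsicInterior {s : Set V} (hs : Convex ℝ s) :
    Convex ℝ (intrinsicInterior ℝ s) := by
  intro x hx y hy a b ha hb hab
  let φ : V × V →ₗ[ℝ] V := a • LinearMap.fst ℝ V V + b • LinearMap.snd ℝ V V
  have hφ : φ.toAffineMap '' s ×ˢ s = s := by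
    refine Subset.antisymm ?_ fun z hz => ⟨(z, z), ⟨hz, hz⟩, ?_⟩
    · rintro _ ⟨⟨u, w⟩, ⟨hu, hw⟩, rfl⟩
      exact hs hu hw ha hb hab
    · simp [φ, ← add_smul, hab]
  have := φ.toAffineMap.image_intrinsicInterior_subset (s ×ˢ s)
    ⟨(x, y), by rw [intrinsicInterior_prod_eq]; exact ⟨hx, hy⟩, rfl⟩
  rwa [hφ] at this

theorem zero_mem_intrinsicInterior_of_neg_eq {s : Set V} (hs : Convex ℝ s) (hne : s.Nonempty)
    (hneg : -s = s) : (0 : V) ∈ intrinsicInterior ℝ s := by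
  obtain ⟨x, hx⟩ := hne.intrinsicInterior hs
  have hnx : -x ∈ intrinsicInterior ℝ s := by
    have := (-LinearMap.id : V →ₗ[ℝ] V).toAffineMap.image_intrinsicInterior_subset s
      ⟨x, hx, rfl⟩
    simpa [Set.image_neg_eq_neg, hneg] using this
  simpa using hs.intrinsicInterior hx hnx (by norm_num : (0 : ℝ) ≤ 1 / 2)
    (by norm_num : (0 : ℝ) ≤ 1 / 2) (by norm_num)

end IntrinsicInterior

section MatrixExp

open NormedSpace

variable {n : Type*} [Fintype n] [DecidableEq n]

section
attribute [local instance] Matrix.linftyOpNormedRing Matrix.linftyOpNormedAlgebra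

theorem Matrix.exp_mulVec_eq_sum_of_pow_mulVec_eq_zero {𝕂 : Type*} [RCLike 𝕂]
    {N : Matrix n n 𝕂} {v : n → 𝕂} {k : ℕ} (hk : N ^ k *ᵥ v = 0) :
    exp N *ᵥ v = ∑ j ∈ Finset.range k, (j.factorial⁻¹ : 𝕂) • (N ^ j *ᵥ v) := by
  have hsum : HasSum (fun j : ℕ => (j.factorial⁻¹ : 𝕂) • (N ^ j *ᵥ v)) (exp N *ᵥ v) := by
    have := (exp_series_hasSum_exp' (𝕂 := 𝕂) N).map
      ((LinearMap.applyₗ v).comp (Matrix.toLin' : Matrix n n 𝕂 ≃ₗ[𝕂] _).toLinearMap)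
      (continuous_id.matrix_mulVec continuous_const)
    simp only [LinearMap.coe_comp, Function.comp_def, LinearEquiv.coe_coe,
      LinearMap.applyₗ_apply_apply, Matrix.toLin'_apply, Matrix.smul_mulVec] at this
    exact this
  refine hsum.unique (hasSum_sum_of_ne_finset_zero fun j hj => ?_)
  rw [Finset.mem_range, not_lt] at hj
  rw [← Nat.sub_add_cancel hj, pow_add, ← Matrix.mulVec_mulVec, hk, Matrix.mulVec_zero, smul_zero]

theorem Matrix.exp_smul_one_add (z : ℂ) (N : Matrix n n ℂ) :
    exp (z • (1 : Matrix n n ℂ) + N) = Complex.exp z • exp N := by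
  have hscalar : exp (algebraMap ℂ (Matrix n n ℂ) z) = algebraMap ℂ _ (exp z) :=
    (algebraMap_exp_comm z).symm
  rw [Matrix.exp_add_of_commute _ _ ((Commute.one_left N).smul_left z),
    ← Algebra.algebraMap_eq_smul_one, hscalar, Complex.exp_eq_exp_ℂ,
    Algebra.algebraMap_eq_smul_one, smul_mul_assoc, one_mul]

end

theorem tendsto_cexp_mul_mul_pow_atTop_nhds_zero {μ : ℂ} (hμ : μ.re < 0) (j : ℕ) :
    Tendsto (fun t : ℝ => Complex.exp (t * μ) * (t : ℂ) ^ j) atTop (𝓝 0) := by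
  rw [tendsto_zero_iff_norm_tendsto_zero]
  refine (tendsto_rpow_mul_exp_neg_mul_atTop_nhds_zero j (-μ.re) (by linarith)).congr' ?_
  filter_upwards [eventually_ge_atTop 0] with t ht
  rw [norm_mul, Complex.norm_exp, norm_pow, Complex.norm_real, Real.norm_of_nonneg ht,
    Real.rpow_natCast, Complex.re_ofReal_mul, mul_comm, neg_mul, neg_mul_eq_mul_neg, mul_comm t]
  ring_nf

/-- On a generalized eigenvector for `μ`, `exp (t • M)` is `e^{tμ}` times a polynomial in `t`. -/
theorem Matrix.tendsto_exp_smul_mulVec_of_pow_mulVec_eq_zero {M : Matrix n n ℂ} {μ : ℂ}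
    (hμ : μ.re < 0) {v : n → ℂ} {k : ℕ} (hk : (M - μ • 1) ^ k *ᵥ v = 0) :
    Tendsto (fun t : ℝ => exp (t • M) *ᵥ v) atTop (𝓝 0) := by
  set N := M - μ • 1
  have hexp : ∀ t : ℝ, exp (t • M) *ᵥ v = ∑ j ∈ Finset.range k,
      (Complex.exp (t * μ) * (t : ℂ) ^ j * (j.factorial⁻¹ : ℂ)) • (N ^ j *ᵥ v) := by
    intro t
    have hsplit : t • M = ((t : ℂ) * μ) • (1 : Matrix n n ℂ) + (t : ℂ) • N := by
      rw [← Complex.coe_smul, smul_sub, smul_smul, add_sub_cancel]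
    have hk' : ((t : ℂ) • N) ^ k *ᵥ v = 0 := by rw [smul_pow, Matrix.smul_mulVec, hk, smul_zero]
    rw [hsplit, Matrix.exp_smul_one_add, Matrix.smul_mulVec,
      Matrix.exp_mulVec_eq_sum_of_pow_mulVec_eq_zero hk', Finset.smul_sum]
    refine Finset.sum_congr rfl fun j _ => ?_
    rw [smul_pow, Matrix.smul_mulVec, smul_smul, smul_smul]
    ring_nf
  have := tendsto_finsetSum (Finset.range k) fun j _ =>
    ((tendsto_cexp_mul_mul_pow_atTop_nhds_zero hμ j).mul_const (j.factorial⁻¹ : ℂ)).smul_const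
      (N ^ j *ᵥ v)
  simpa only [hexp, zero_mul, zero_smul, Finset.sum_const_zero] using this

theorem Matrix.tendsto_exp_smul_mulVec_of_isRoot_charpoly_re_neg {M : Matrix n n ℂ}
    (hM : ∀ μ : ℂ, M.charpoly.IsRoot μ → μ.re < 0) (v : n → ℂ) :
    Tendsto (fun t : ℝ => exp (t • M) *ᵥ v) atTop (𝓝 0) := by
  let f : Module.End ℂ (n → ℂ) := Matrix.toLinAlgEquiv' M
  have hv : v ∈ ⨆ μ, f.maxGenEigenspace μ := by
    rw [Module.End.iSup_maxGenEigenspace_eq_top]; trivial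
  induction hv using Submodule.iSup_induction' with
  | mem μ w hw =>
    rcases eq_or_ne w 0 with rfl | hw0
    · simp
    have hμ : f.HasEigenvalue μ := Module.End.HasUnifEigenvalue.lt zero_lt_one
      ((Submodule.ne_bot_iff _).2 ⟨w, hw, hw0⟩)
    rw [Module.End.hasEigenvalue_iff_isRoot_charpoly] at hμ
    obtain ⟨k, hk⟩ := (f.mem_maxGenEigenspace μ w).1 hw
    refine tendsto_exp_smul_mulVec_of_pow_mulVec_eq_zero (hM μ ?_) (k := k) ?_
    · rwa [← Matrix.charpoly_toLin']
    · simpa [f, ← Matrix.toLinAlgEquiv'_apply] using hk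
  | zero => simp
  | add w₁ w₂ _ _ h₁ h₂ => simpa [Matrix.mulVec_add] using h₁.add h₂

end MatrixExp

section Trajectory

open NormedSpace Polynomial

variable {d : ℕ} {A : Matrix (Fin d) (Fin d) ℝ}

section
attribute [local instance] Matrix.linftyOpNormedRing Matrix.linftyOpNormedAlgebra

theorem traj_ofReal (x₀ : Fin d → ℝ) (t : ℝ) :
    (fun i => (traj A x₀ t i : ℂ)) =
      exp (t • A.map (algebraMap ℝ ℂ)) *ᵥ fun i => (x₀ i : ℂ) := by
  let φ := (algebraMap ℝ ℂ).mapMatrix (m := Fin d)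
  have hφ : φ (exp (t • A)) = exp (t • A.map (algebraMap ℝ ℂ)) := by
    refine (map_exp φ (continuous_id.matrix_map Complex.continuous_ofReal) _).trans
      (congrArg exp ?_)
    ext i j
    simp [φ]
  ext i
  rw [traj, ← hφ]
  exact RingHom.map_mulVec (algebraMap ℝ ℂ) (exp (t • A)) x₀ i

end

theorem IsHurwitz.tendsto_traj (hA : IsHurwitz A) (x₀ : Fin d → ℝ) :
    Tendsto (traj A x₀) atTop (𝓝 0) := by
  have hre : Tendsto (fun z : Fin d → ℂ => fun i => (z i).re) (𝓝 0) (𝓝 0) :=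
    (by fun_prop : Continuous fun z : Fin d → ℂ => fun i => (z i).re).tendsto' 0 0 (by simp; rfl)
  have htraj : traj A x₀ = (fun z i => (z i).re) ∘
      fun t : ℝ => exp (t • A.map (algebraMap ℝ ℂ)) *ᵥ fun i => (x₀ i : ℂ) := by
    funext t i
    simp only [Function.comp_apply, ← traj_ofReal, Complex.ofReal_re]
  rw [htraj]
  exact hre.comp
    (Matrix.tendsto_exp_smul_mulVec_of_isRoot_charpoly_re_neg hA fun i => (x₀ i : ℂ))

theorem neg_symCo (X : Set (Fin d → ℝ)) : -symCo X = symCo X := by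
  rw [symCo, ← convexHull_neg, Set.union_neg, neg_neg, Set.union_comm]

theorem zero_mem_intrinsicInterior_trajHull (x₀ : Fin d → ℝ) :
    (0 : Fin d → ℝ) ∈ intrinsicInterior ℝ (trajHull A x₀) :=
  zero_mem_intrinsicInterior_of_neg_eq (convex_convexHull ℝ _)
    ⟨traj A x₀ 0, subset_convexHull ℝ _ (.inl (mem_image_of_mem _ self_mem_Ici))⟩ (neg_symCo _)

theorem IsHurwitz.exists_isCutTailPoint (hA : IsHurwitz A) (x₀ : Fin d → ℝ) :
    ∃ T, IsCutTailPoint A x₀ T := by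
  have hspan : ∀ᶠ t in atTop, traj A x₀ t ∈ affineSpan ℝ (trajHull A x₀) := by
    filter_upwards [eventually_ge_atTop 0] with t ht
    exact subset_affineSpan ℝ _ (subset_convexHull ℝ _ (.inl (mem_image_of_mem _ ht)))
  obtain ⟨T, hT⟩ := eventually_atTop.1 ((hA.tendsto_traj x₀).eventually_mem_intrinsicInterior
    (zero_mem_intrinsicInterior_trajHull x₀) hspan)
  exact ⟨max T 1, by positivity, fun t ht => hT t (le_of_max_le_left ht)⟩

theorem traj_mulVec {B : Matrix (Fin d) (Fin d) ℝ} (hAB : Commute A B) (x₀ : Fin d → ℝ)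
    (t : ℝ) : traj A (B *ᵥ x₀) t = B *ᵥ traj A x₀ t := by
  rw [traj, traj, Matrix.mulVec_mulVec, Matrix.mulVec_mulVec,
    ((hAB.symm.smul_right t).exp_right).eq]

theorem trajHull_mulVec {B : Matrix (Fin d) (Fin d) ℝ} (hAB : Commute A B) (x₀ : Fin d → ℝ) :
    trajHull A (B *ᵥ x₀) = B.mulVecLin '' trajHull A x₀ := by
  rw [trajHull, trajHull, symCo, symCo, LinearMap.image_convexHull, Set.image_union,
    Set.image_neg, Set.image_image]
  simp only [traj_mulVec hAB, Matrix.mulVecLin_apply]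

theorem IsCutTailPoint.mulVec {B : Matrix (Fin d) (Fin d) ℝ} (hAB : Commute A B)
    {x₀ : Fin d → ℝ} {T : ℝ} (hT : IsCutTailPoint A x₀ T) : IsCutTailPoint A (B *ᵥ x₀) T := by
  refine ⟨hT.1, fun t ht => ?_⟩
  rw [traj_mulVec hAB, trajHull_mulVec hAB]
  exact B.mulVecLin.toAffineMap.image_intrinsicInterior_subset _ ⟨_, hT.2 t ht, rfl⟩

theorem exists_commute_mulVec_eq_of_mem_minInv {x₀ y₀ : Fin d → ℝ} (hy₀ : y₀ ∈ minInv A x₀) :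
    ∃ B, Commute A B ∧ B *ᵥ x₀ = y₀ := by
  let K := LinearMap.range ((LinearMap.applyₗ x₀).comp
    ((Matrix.toLin' : Matrix (Fin d) (Fin d) ℝ ≃ₗ[ℝ] _).toLinearMap.comp
      (aeval A).toLinearMap))
  have hK : minInv A x₀ ≤ K := by
    refine sInf_le ⟨⟨1, by simp⟩, ?_⟩
    rintro _ ⟨p, rfl⟩
    exact ⟨X * p, by simp [Matrix.mulVec_mulVec]⟩
  obtain ⟨p, rfl⟩ := hK hy₀
  exact ⟨aeval A p, by simpa using (Commute.all X p).map (aeval A), rfl⟩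

end Trajectory

theorem Tcut_mono_of_mem_minInv_general {d : ℕ} (A : Matrix (Fin d) (Fin d) ℝ) (hA : IsHurwitz A)
    (x₀ : Fin d → ℝ) (y₀ : Fin d → ℝ) (hy₀ : y₀ ∈ minInv A x₀) :
    Tcut A y₀ ≤ Tcut A x₀ := by
  obtain ⟨B, hAB, rfl⟩ := exists_commute_mulVec_eq_of_mem_minInv hy₀
  exact csInf_le_csInf ⟨0, fun T hT => hT.1.le⟩ (hA.exists_isCutTailPoint x₀)
    fun T hT => hT.mulVec hAB

/-- (Proposition 2) For every `y₀ ∈ L_{x₀}` one has `T_cut(y₀) ≤ T_cut(x₀)`. -/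
theorem Tcut_mono_of_mem_minInv {d : ℕ} (A : Matrix (Fin d) (Fin d) ℝ) (hA : IsHurwitz A)
    (x₀ : Fin d → ℝ) (hx₀ : x₀ ≠ 0) (y₀ : Fin d → ℝ) (hy₀ : y₀ ∈ minInv A x₀) :
    Tcut A y₀ ≤ Tcut A x₀ :=
  Tcut_mono_of_mem_minInv_general A hA x₀ y₀ hy₀
end
end

section
/- (Corollary) Let A be a Hurwitz d×d real matrix and x, y ∈ ℝ^d. If L_y = L_x, then T_cut(y) = T_cut(x). -/
open Matrix Set Filter Topology

noncomputable section

/-!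
If `L_y = L_x`, then `y = p(A) x` and `x = q(A) y` for real polynomials `p`, `q`. The matrix
`p(A)` commutes with `e^{tA}`, so it carries the trajectory of `x` onto that of `y`, and `q(A)`
undoes this on the trajectory of `x`; hence `p(A)` is injective on the span of that trajectory
and extends to a linear automorphism of `ℝ^d`. Such an automorphism maps the trajectory, its
symmetrized convex hull and the relative interior of that hull for `x` onto those for `y`, so the
two trajectories have the same cut tail points.
-/

open Polynomial

section LinearAlgebra

variable {K V : Type*} [Field K] [AddCommGroup V] [Module K V] [FiniteDimensional K V]

theorem LinearMap.exists_linearEquiv_eqOn_of_injOn (f : V →ₗ[K] V) {U : Submodule K V}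
    (hf : InjOn f U) : ∃ e : V ≃ₗ[K] V, EqOn e f U := by
  let W := LinearMap.range (f.domRestrict U)
  let fU : U ≃ₗ[K] W := LinearEquiv.ofInjective _ fun u v huv ↦
    Subtype.ext (hf u.2 v.2 huv)
  obtain ⟨U', hU'⟩ := U.exists_isCompl
  obtain ⟨W', hW'⟩ := W.exists_isCompl
  have hrank : Module.finrank K U' = Module.finrank K W' := by
    have := Submodule.finrank_add_eq_of_isCompl hU'
    have := Submodule.finrank_add_eq_of_isCompl hW'
    have := fU.finrank_eq
    omega
  refine ⟨(U.prodEquivOfIsCompl U' hU').symm ≪≫ₗ fU.prodCongr (.ofFinrankEq _ _ hrank) ≪≫ₗ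
    W.prodEquivOfIsCompl W' hW', fun u hu ↦ ?_⟩
  rw [show u = ((⟨u, hu⟩ : U) : V) from rfl, LinearEquiv.trans_apply, LinearEquiv.trans_apply,
    Submodule.prodEquivOfIsCompl_symm_apply_left]
  simp only [LinearEquiv.prodCongr_apply, map_zero, Submodule.coe_prodEquivOfIsCompl',
    ZeroMemClass.coe_zero, add_zero, fU]
  rfl

end LinearAlgebra

section Trajectory

variable {d : ℕ}

theorem mem_minInv_self_s7 (A : Matrix (Fin d) (Fin d) ℝ) (x : Fin d → ℝ) : x ∈ minInv A x :=
  Submodule.mem_sInf.2 fun _ hL ↦ hL.1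

theorem exists_aeval_mulVec_eq_of_mem_minInv {A : Matrix (Fin d) (Fin d) ℝ} {x y : Fin d → ℝ}
    (hy : y ∈ minInv A x) : ∃ p : ℝ[X], aeval A p *ᵥ x = y := by
  let L : Submodule ℝ (Fin d → ℝ) :=
    { carrier := {v | ∃ p : ℝ[X], aeval A p *ᵥ x = v}
      add_mem' := by
        rintro _ _ ⟨p, rfl⟩ ⟨q, rfl⟩
        exact ⟨p + q, by simp [Matrix.add_mulVec]⟩
      zero_mem' := ⟨0, by simp⟩
      smul_mem' := by
        rintro c _ ⟨p, rfl⟩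
        exact ⟨c • p, by simp [Matrix.smul_mulVec]⟩ }
  refine Submodule.mem_sInf.1 hy L ⟨⟨1, by simp⟩, ?_⟩
  rintro _ ⟨p, rfl⟩
  exact ⟨X * p, by simp [Matrix.mulVec_mulVec]⟩

theorem traj_mulVec_of_commute {A B : Matrix (Fin d) (Fin d) ℝ} (hAB : Commute A B)
    (x : Fin d → ℝ) (t : ℝ) : traj A (B *ᵥ x) t = B *ᵥ traj A x t := by
  simp only [traj, Matrix.mulVec_mulVec, ((hAB.smul_left t).exp_left).eq]

theorem traj_aeval_mulVec (A : Matrix (Fin d) (Fin d) ℝ) (p : ℝ[X]) (x : Fin d → ℝ) (t : ℝ) :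
    traj A (aeval A p *ᵥ x) t = aeval A p *ᵥ traj A x t :=
  traj_mulVec_of_commute (by simpa using (commute_X p).map (aeval A)) x t

theorem exists_linearEquiv_traj_eq {A : Matrix (Fin d) (Fin d) ℝ} {x y : Fin d → ℝ}
    (hy : y ∈ minInv A x) (hx : x ∈ minInv A y) :
    ∃ e : (Fin d → ℝ) ≃ₗ[ℝ] (Fin d → ℝ), ∀ t, e (traj A x t) = traj A y t := by
  obtain ⟨p, rfl⟩ := exists_aeval_mulVec_eq_of_mem_minInv hy
  obtain ⟨q, hq⟩ := exists_aeval_mulVec_eq_of_mem_minInv hx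
  have hqp : EqOn (aeval A (q * p)).mulVecLin (LinearMap.id (R := ℝ)) (range (traj A x)) := by
    rintro _ ⟨t, rfl⟩
    simp [← traj_aeval_mulVec, hq]
  have hinj : InjOn (aeval A p).mulVecLin (Submodule.span ℝ (range (traj A x))) :=
    LeftInvOn.injOn (f₁' := (aeval A q).mulVecLin) fun u hu ↦ by
      simpa [Matrix.mulVec_mulVec] using LinearMap.eqOn_span hqp hu
  obtain ⟨e, he⟩ := (aeval A p).mulVecLin.exists_linearEquiv_eqOn_of_injOn hinj
  exact ⟨e, fun t ↦ (he (Submodule.subset_span ⟨t, rfl⟩)).trans (traj_aeval_mulVec A p x t).symm⟩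

theorem image_symCo (f : (Fin d → ℝ) →ₗ[ℝ] (Fin d → ℝ)) (X : Set (Fin d → ℝ)) :
    f '' symCo X = symCo (f '' X) := by
  rw [symCo, symCo, f.image_convexHull, image_union,
    image_neg_of_apply_neg_eq_neg fun v _ ↦ map_neg f v]

theorem trajHull_eq_image_of_traj_eq {A : Matrix (Fin d) (Fin d) ℝ} {x y : Fin d → ℝ}
    (e : (Fin d → ℝ) ≃ₗ[ℝ] (Fin d → ℝ)) (he : ∀ t, e (traj A x t) = traj A y t) :
    trajHull A y = e '' trajHull A x := by
  rw [trajHull, trajHull, ← e.coe_toLinearMap, image_symCo, ← image_comp]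
  simp [he]

theorem isCutTailPoint_iff_of_traj_eq {A : Matrix (Fin d) (Fin d) ℝ} {x y : Fin d → ℝ}
    (e : (Fin d → ℝ) ≃ₗ[ℝ] (Fin d → ℝ)) (he : ∀ t, e (traj A x t) = traj A y t) (T : ℝ) :
    IsCutTailPoint A y T ↔ IsCutTailPoint A x T := by
  have hmem (t : ℝ) : traj A y t ∈ intrinsicInterior ℝ (trajHull A y) ↔
      traj A x t ∈ intrinsicInterior ℝ (trajHull A x) := by
    rw [trajHull_eq_image_of_traj_eq e he, ← he, ← e.coe_toAffineEquiv,
      AffineEquiv.intrinsicInterior_image, e.toAffineEquiv.injective.mem_set_image]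
  simp only [IsCutTailPoint, hmem]

end Trajectory

theorem Tcut_eq_of_minInv_eq_general {d : ℕ} (A : Matrix (Fin d) (Fin d) ℝ)
    (x y : Fin d → ℝ) (h : minInv A y = minInv A x) :
    Tcut A y = Tcut A x := by
  obtain ⟨e, he⟩ :=
    exists_linearEquiv_traj_eq (h ▸ mem_minInv_self_s7 A y) (h ▸ mem_minInv_self_s7 A x)
  simp only [Tcut, isCutTailPoint_iff_of_traj_eq e he]

/-- (Corollary) If `L_y = L_x`, then `T_cut(y) = T_cut(x)`. -/
theorem Tcut_eq_of_minInv_eq {d : ℕ} (A : Matrix (Fin d) (Fin d) ℝ) (hA : IsHurwitz A)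
    (x y : Fin d → ℝ) (h : minInv A y = minInv A x) :
    Tcut A y = Tcut A x :=
  Tcut_eq_of_minInv_eq_general A x y h
end
end

section
/- (Alternance theorem) Let φ₁,…,φₙ be linearly independent continuous real-valued functions on a compact metric space Q, 𝒫 = span{φ₁,…,φₙ}, ℓ a nonzero linear functional on 𝒫, and let u(t) = (φ₁(t),…,φₙ(t)) ∈ ℝⁿ. A polynomial p ∈ 𝒫 with ℓ(p) = 1 satisfies ‖p‖_{C(Q)} = min{‖q‖_{C(Q)} : q ∈ 𝒫, ℓ(q) = 1} if and only if p possesses an alternance of at most n points, i.e., there exist N ≤ n points t₁,…,t_N ∈ Q with |p(tᵢ)| = ‖p‖_{C(Q)} for all i such that the conic hull of the vectors a(tᵢ) = sign(p(tᵢ))·u(tᵢ), i = 1,…,N, contains the co-vector of ℓ or its negative. -/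
/-!
Let `M = ‖p‖` and `A = {sign p(t) • u(t) : |p(t)| = M}`. Every `a ∈ A` satisfies `⟨a, p⟩ = M`,
so `A` lies in an affine hyperplane missing the origin: `ℓ` lies in the conic hull of `A` iff
`M • ℓ` lies in the convex hull of `A`, and Carathéodory's theorem inside that hyperplane needs
at most `n` points.

If `ℓ = ∑ cᵢ aᵢ`, then `1 = ℓ(q) ≤ (∑ cᵢ) ‖q‖` while `1 = ℓ(p) = (∑ cᵢ) M`, so `p` is optimal;
the alternative `-ℓ = ∑ cᵢ aᵢ` is impossible because `⟨∑ cᵢ aᵢ, p⟩ ≥ 0`. Conversely, if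
`M • ℓ ∉ conv A`, a functional `h` separating it from this compact convex set yields
`g = h - ℓ(h) p` with `ℓ(g) = 0` and `p(t) g(t) < 0` wherever `|p(t)| = M`; then `p + ε g`
satisfies `ℓ = 1` and has smaller norm for small `ε > 0`.
-/

open Set Matrix

noncomputable section

/-- The uniform norm `‖p‖_{C(Q)} = sup_{t ∈ Q} |p t|` of a function on `Q`. -/
def supNorm {Q : Type*} (p : Q → ℝ) : ℝ :=
  sSup (Set.range fun t => |p t|)

/-- The moment vector-function `u(t) = (φ₁(t),…,φₙ(t)) ∈ ℝⁿ`. -/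
def momentVec {Q : Type*} {n : ℕ} (φ : Fin n → Q → ℝ) (t : Q) : Fin n → ℝ :=
  fun i => φ i t

/-- Evaluation of the polynomial with coefficient vector `p`: `p(t) = ⟨p, u(t)⟩`. -/
def polyEval {Q : Type*} {n : ℕ} (φ : Fin n → Q → ℝ) (p : Fin n → ℝ) (t : Q) : ℝ :=
  p ⬝ᵥ momentVec φ t

namespace Real

theorem sign_mul_self (x : ℝ) : sign x * x = |x| := by
  rcases lt_trichotomy x 0 with h | rfl | h
  · rw [sign_of_neg h, abs_of_neg h, neg_one_mul]
  · simp
  · rw [sign_of_pos h, abs_of_pos h, one_mul]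

theorem sign_mul_abs (x : ℝ) : sign x * |x| = x := by
  rcases lt_trichotomy x 0 with h | rfl | h
  · rw [sign_of_neg h, abs_of_neg h, neg_one_mul, neg_neg]
  · simp
  · rw [sign_of_pos h, abs_of_pos h, one_mul]

theorem sign_mul_le_abs (y x : ℝ) : sign y * x ≤ |x| := by
  rcases sign_apply_eq y with h | h | h <;> rw [h]
  · simpa using neg_le_abs x
  · simp
  · simpa using le_abs_self x

end Real

theorem supNorm_nonneg {X : Type*} (f : X → ℝ) : 0 ≤ supNorm f :=
  Real.sSup_nonneg (by rintro _ ⟨x, rfl⟩; exact abs_nonneg _)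

theorem supNorm_eq_norm {X : Type*} [TopologicalSpace X] [CompactSpace X] (f : C(X, ℝ)) :
    supNorm f = ‖f‖ := by
  simp only [supNorm, ContinuousMap.norm_eq_iSup_norm, Real.norm_eq_abs, iSup]

theorem abs_le_supNorm {X : Type*} [TopologicalSpace X] [CompactSpace X] {f : X → ℝ}
    (hf : Continuous f) (x : X) : |f x| ≤ supNorm f :=
  (supNorm_eq_norm ⟨f, hf⟩).symm ▸ ContinuousMap.norm_coe_le_norm ⟨f, hf⟩ x

theorem AffineIndependent.linearIndependent_of_forall_map_eq {k V ι : Type*} [Field k]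
    [AddCommGroup V] [Module k V] {z : ι → V} (hz : AffineIndependent k z) (f : V →ₗ[k] k)
    {c : k} (hc : c ≠ 0) (hf : ∀ i, f (z i) = c) : LinearIndependent k z := by
  rw [linearIndependent_iff']
  intro s g hg i hi
  refine hz.eq_zero_of_sum_eq_zero ?_ hg i hi
  have hfg := congrArg f hg
  simp only [map_sum, map_smul, hf, smul_eq_mul, map_zero, ← Finset.sum_mul] at hfg
  exact (mul_eq_zero.mp hfg).resolve_right hc

theorem exists_le_finrank_of_mem_convexHull {𝕜 E : Type*} [Field 𝕜] [LinearOrder 𝕜]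
    [IsStrictOrderedRing 𝕜] [AddCommGroup E] [Module 𝕜 E] [FiniteDimensional 𝕜 E]
    {s : Set E} {f : E →ₗ[𝕜] 𝕜} {c : 𝕜} (hc : c ≠ 0) (hs : ∀ x ∈ s, f x = c) {x : E}
    (hx : x ∈ convexHull 𝕜 s) :
    ∃ N ≤ Module.finrank 𝕜 E, ∃ w ∈ stdSimplex 𝕜 (Fin N), ∃ z ∈ univ.pi fun _ : Fin N => s,
      ∑ i, w i • z i = x := by
  obtain ⟨ι, _, z, w, hzs, hz, hw, hw1, hwz⟩ := eq_pos_convex_span_of_mem_convexHull hx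
  have hli := hz.linearIndependent_of_forall_map_eq f hc fun i => hs _ (hzs ⟨i, rfl⟩)
  let e := (Fintype.equivFin ι).symm
  refine ⟨Fintype.card ι, hli.fintype_card_le_finrank, w ∘ e,
    ⟨fun i => (hw _).le, (e.sum_comp w).trans hw1⟩, z ∘ e, fun i _ => hzs ⟨_, rfl⟩,
    (e.sum_comp fun i => w i • z i).trans hwz⟩

theorem IsCompact.convexHull_of_forall_map_eq {E : Type*} [AddCommGroup E] [Module ℝ E]
    [FiniteDimensional ℝ E] [TopologicalSpace E] [IsTopologicalAddGroup E] [ContinuousSMul ℝ E]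
    {s : Set E} (hK : IsCompact s) {f : E →ₗ[ℝ] ℝ} {c : ℝ} (hc : c ≠ 0)
    (hs : ∀ x ∈ s, f x = c) : IsCompact (convexHull ℝ s) := by
  have hhull : convexHull ℝ s = ⋃ N ∈ Iic (Module.finrank ℝ E),
      (fun wz : (Fin N → ℝ) × (Fin N → E) => ∑ i, wz.1 i • wz.2 i) ''
        (stdSimplex ℝ (Fin N) ×ˢ univ.pi fun _ => s) := by
    refine Subset.antisymm (fun x hx => ?_) (iUnion₂_subset fun N _ => ?_)
    · obtain ⟨N, hN, w, hw, z, hz, rfl⟩ := exists_le_finrank_of_mem_convexHull hc hs hx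
      exact mem_biUnion hN ⟨(w, z), ⟨hw, hz⟩, rfl⟩
    · rintro _ ⟨⟨w, z⟩, ⟨hw, hz⟩, rfl⟩
      exact (convex_convexHull ℝ s).sum_mem (fun i _ => hw.1 i) hw.2
        fun i _ => subset_convexHull ℝ s (hz i trivial)
  rw [hhull]
  exact (finite_Iic _).isCompact_biUnion fun N _ =>
    ((isCompact_stdSimplex _ _).prod (isCompact_univ_pi fun _ => hK)).image (by fun_prop)

theorem ContinuousMap.exists_norm_add_smul_lt {X : Type*} [TopologicalSpace X] [CompactSpace X]
    [Nonempty X] {f g : C(X, ℝ)} (h : ∀ x, |f x| = ‖f‖ → f x * g x < 0) :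
    ∃ ε : ℝ, 0 < ε ∧ ‖f + ε • g‖ < ‖f‖ := by
  -- `η` bounds from below, at every point, either the room `‖f‖ - |f x|` left below the norm
  -- or the first-order decrease `-(f x * g x)`; `ε = η / (‖g‖ + 1) ^ 2` is small in both regimes.
  have hm : Continuous fun x => max (‖f‖ - |f x|) (-(f x * g x)) := by fun_prop
  obtain ⟨x₀, -, hx₀⟩ := isCompact_univ.exists_isMinOn univ_nonempty hm.continuousOn
  set η := max (‖f‖ - |f x₀|) (-(f x₀ * g x₀))
  have hη : 0 < η := by
    rcases (f.norm_coe_le_norm x₀).lt_or_eq with hlt | heq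
    · exact lt_max_of_lt_left (by rw [Real.norm_eq_abs] at hlt; linarith)
    · exact lt_max_of_lt_right (by linarith [h x₀ heq])
  set C := ‖g‖
  have hC : 0 ≤ C := norm_nonneg g
  refine ⟨η / (C + 1) ^ 2, by positivity, (norm_lt_iff_of_nonempty _).mpr fun x => ?_⟩
  set ε := η / (C + 1) ^ 2
  have hε : 0 < ε := by positivity
  have hεC : ε * (C + 1) ^ 2 = η := div_mul_cancel₀ _ (by positivity)
  have hgx : |g x| ≤ C := g.norm_coe_le_norm x
  have hfx : |f x| ≤ ‖f‖ := f.norm_coe_le_norm x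
  simp only [ContinuousMap.add_apply, ContinuousMap.smul_apply, smul_eq_mul, Real.norm_eq_abs]
  rcases le_max_iff.mp (show η ≤ _ from isMinOn_iff.mp hx₀ x trivial) with hfar | hnear
  · calc |f x + ε * g x| ≤ |f x| + ε * C := by
          refine (abs_add_le _ _).trans (add_le_add_right ?_ _)
          rw [abs_mul, abs_of_pos hε]
          exact mul_le_mul_of_nonneg_left hgx hε.le
      _ < ‖f‖ := by nlinarith
  · refine abs_lt_of_sq_lt_sq ?_ (norm_nonneg f)
    have hg2 : g x ^ 2 ≤ C ^ 2 := sq_le_sq' (abs_le.mp hgx).1 (abs_le.mp hgx).2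
    have hf2 : f x ^ 2 ≤ ‖f‖ ^ 2 := sq_le_sq' (abs_le.mp hfx).1 (abs_le.mp hfx).2
    have hεg : ε * g x ^ 2 ≤ η := by nlinarith
    nlinarith

section Alternance

variable {Q : Type*} {n : ℕ} {φ : Fin n → Q → ℝ}

def signedMomentVec (φ : Fin n → Q → ℝ) (p : Fin n → ℝ) (t : Q) : Fin n → ℝ :=
  Real.sign (polyEval φ p t) • momentVec φ t

def extremalMoments (φ : Fin n → Q → ℝ) (p : Fin n → ℝ) : Set (Fin n → ℝ) :=
  signedMomentVec φ p '' {t | |polyEval φ p t| = supNorm (polyEval φ p)}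

theorem polyEval_add_smul (φ : Fin n → Q → ℝ) (p g : Fin n → ℝ) (ε : ℝ) :
    polyEval φ (p + ε • g) = polyEval φ p + ε • polyEval φ g := by
  ext t
  simp [polyEval, add_dotProduct, smul_dotProduct]

theorem exists_polyEval_ne_zero (hli : LinearIndependent ℝ φ) {p : Fin n → ℝ} (hp : p ≠ 0) :
    ∃ t, polyEval φ p t ≠ 0 := by
  by_contra! h
  refine hp (funext (Fintype.linearIndependent_iff.mp hli p (funext fun t => ?_)))
  simpa [polyEval, dotProduct, momentVec] using h t

theorem signedMomentVec_dotProduct (φ : Fin n → Q → ℝ) (p q : Fin n → ℝ) (t : Q) :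
    signedMomentVec φ p t ⬝ᵥ q = Real.sign (polyEval φ p t) * polyEval φ q t := by
  rw [signedMomentVec, smul_dotProduct, smul_eq_mul, dotProduct_comm]
  rfl

theorem sum_smul_signedMomentVec_dotProduct_self (φ : Fin n → Q → ℝ) (p : Fin n → ℝ) {N : ℕ}
    {ts : Fin N → Q} (hts : ∀ i, |polyEval φ p (ts i)| = supNorm (polyEval φ p))
    (c : Fin N → ℝ) :
    (∑ i, c i • signedMomentVec φ p (ts i)) ⬝ᵥ p = (∑ i, c i) * supNorm (polyEval φ p) := by
  simp only [sum_dotProduct, smul_dotProduct, smul_eq_mul, signedMomentVec_dotProduct,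
    Real.sign_mul_self, hts, Finset.sum_mul]

theorem neg_ne_sum_smul_signedMomentVec {p ℓ : Fin n → ℝ} (hp : ℓ ⬝ᵥ p = 1) {N : ℕ}
    {ts : Fin N → Q} (hts : ∀ i, |polyEval φ p (ts i)| = supNorm (polyEval φ p)) {c : Fin N → ℝ}
    (hc : ∀ i, 0 ≤ c i) : -ℓ ≠ ∑ i, c i • signedMomentVec φ p (ts i) := by
  intro hℓ
  have hpc := sum_smul_signedMomentVec_dotProduct_self φ p hts c
  rw [← hℓ, neg_dotProduct, hp] at hpc
  nlinarith [Finset.sum_nonneg fun i (_ : i ∈ Finset.univ) => hc i, supNorm_nonneg (polyEval φ p)]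

theorem dotProduct_signedMomentVec_self (φ : Fin n → Q → ℝ) (p : Fin n → ℝ) (t : Q) :
    p ⬝ᵥ signedMomentVec φ p t = |polyEval φ p t| := by
  rw [dotProduct_comm, signedMomentVec_dotProduct, Real.sign_mul_self]

theorem exists_alternance_of_smul_mem_convexHull {p ℓ : Fin n → ℝ}
    (hM : 0 < supNorm (polyEval φ p))
    (h : supNorm (polyEval φ p) • ℓ ∈ convexHull ℝ (extremalMoments φ p)) :
    ∃ N ≤ n, ∃ ts : Fin N → Q,
      (∀ i, |polyEval φ p (ts i)| = supNorm (polyEval φ p)) ∧ ∃ c : Fin N → ℝ, (∀ i, 0 ≤ c i) ∧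
        ℓ = ∑ i, c i • signedMomentVec φ p (ts i) := by
  have hs : ∀ x ∈ extremalMoments φ p,
      dotProductEquiv ℝ (Fin n) p x = supNorm (polyEval φ p) := by
    rintro _ ⟨t, ht, rfl⟩
    exact (dotProduct_signedMomentVec_self φ p t).trans ht
  obtain ⟨N, hN, w, hw, z, hz, hwz⟩ := exists_le_finrank_of_mem_convexHull hM.ne' hs h
  choose ts hts hzts using fun i => hz i trivial
  refine ⟨N, by simpa using hN, ts, hts, fun i => w i / supNorm (polyEval φ p),
    fun i => div_nonneg (hw.1 i) hM.le, ?_⟩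
  rw [← smul_right_injective _ hM.ne' |>.eq_iff, ← hwz, Finset.smul_sum]
  simp only [hzts, smul_smul, mul_div_cancel₀ _ hM.ne']

theorem exists_descent_of_smul_notMem_convexHull {p ℓ : Fin n → ℝ} (hp : ℓ ⬝ᵥ p = 1)
    (hM : 0 < supNorm (polyEval φ p)) (hclosed : IsClosed (convexHull ℝ (extremalMoments φ p)))
    (h : supNorm (polyEval φ p) • ℓ ∉ convexHull ℝ (extremalMoments φ p)) :
    ∃ g, ℓ ⬝ᵥ g = 0 ∧ ∀ t, |polyEval φ p t| = supNorm (polyEval φ p) →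
      polyEval φ p t * polyEval φ g t < 0 := by
  set M := supNorm (polyEval φ p)
  obtain ⟨F, u, hFu, huF⟩ :=
    geometric_hahn_banach_closed_point (convex_convexHull ℝ _) hclosed h
  set f := (dotProductEquiv ℝ (Fin n)).symm F.toLinearMap
  have hF : ∀ x, F x = f ⬝ᵥ x := fun x =>
    (LinearMap.congr_fun ((dotProductEquiv ℝ (Fin n)).apply_symm_apply F.toLinearMap) x).symm
  refine ⟨f - (ℓ ⬝ᵥ f) • p, by rw [dotProduct_sub, dotProduct_smul, hp, smul_eq_mul, mul_one,
    sub_self], fun t ht => ?_⟩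
  have hfu : Real.sign (polyEval φ p t) * polyEval φ f t < u := by
    simpa [hF, dotProduct_comm f, signedMomentVec_dotProduct] using
      hFu _ (subset_convexHull ℝ _ ⟨t, ht, rfl⟩)
  have huf : u < M * (ℓ ⬝ᵥ f) := by simpa [hF, dotProduct_comm f] using huF
  have hPf : polyEval φ p t * polyEval φ f t =
      M * (Real.sign (polyEval φ p t) * polyEval φ f t) := by
    conv_lhs => rw [← Real.sign_mul_abs (polyEval φ p t), ht]
    ring
  have hPP : polyEval φ p t * polyEval φ p t = M * M := by rw [← abs_mul_abs_self, ht]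
  rw [sub_eq_add_neg, ← neg_smul, polyEval_add_smul, Pi.add_apply, Pi.smul_apply, smul_eq_mul]
  have hexpand : polyEval φ p t * (polyEval φ f t + -(ℓ ⬝ᵥ f) * polyEval φ p t) =
      M * (Real.sign (polyEval φ p t) * polyEval φ f t) - (ℓ ⬝ᵥ f) * (M * M) := by
    rw [← hPP, ← hPf]
    ring
  rw [hexpand]
  nlinarith [mul_lt_mul_of_pos_left hfu hM, mul_lt_mul_of_pos_left huf hM]

variable [TopologicalSpace Q]

theorem continuous_polyEval (hcont : ∀ i, Continuous (φ i)) (p : Fin n → ℝ) :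
    Continuous (polyEval φ p) := by
  change Continuous fun t => ∑ i, p i * φ i t
  fun_prop

theorem sum_smul_signedMomentVec_dotProduct_le [CompactSpace Q] (hcont : ∀ i, Continuous (φ i))
    (p q : Fin n → ℝ) {N : ℕ} (ts : Fin N → Q) {c : Fin N → ℝ} (hc : ∀ i, 0 ≤ c i) :
    (∑ i, c i • signedMomentVec φ p (ts i)) ⬝ᵥ q ≤ (∑ i, c i) * supNorm (polyEval φ q) := by
  simp only [sum_dotProduct, smul_dotProduct, smul_eq_mul, signedMomentVec_dotProduct,
    Finset.sum_mul]
  exact Finset.sum_le_sum fun i _ => mul_le_mul_of_nonneg_left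
    ((Real.sign_mul_le_abs _ _).trans (abs_le_supNorm (continuous_polyEval hcont q) _)) (hc i)

theorem isCompact_extremalMoments [CompactSpace Q] (hcont : ∀ i, Continuous (φ i))
    {p : Fin n → ℝ} (hM : 0 < supNorm (polyEval φ p)) : IsCompact (extremalMoments φ p) := by
  set M := supNorm (polyEval φ p)
  have hP := continuous_polyEval hcont p
  have hsign : EqOn (signedMomentVec φ p) (fun t => (polyEval φ p t / M) • momentVec φ t)
      {t | |polyEval φ p t| = M} := fun t ht => by
    have hPt : Real.sign (polyEval φ p t) * M = polyEval φ p t := by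
      rw [← ht]
      exact Real.sign_mul_abs _
    rw [signedMomentVec, eq_div_of_mul_eq hM.ne' hPt]
  rw [extremalMoments, hsign.image_eq]
  exact (isClosed_eq hP.abs continuous_const).isCompact.image
    ((hP.div_const M).smul (continuous_pi hcont))

theorem isCompact_convexHull_extremalMoments [CompactSpace Q] (hcont : ∀ i, Continuous (φ i))
    {p : Fin n → ℝ} (hM : 0 < supNorm (polyEval φ p)) :
    IsCompact (convexHull ℝ (extremalMoments φ p)) := by
  refine (isCompact_extremalMoments hcont hM).convexHull_of_forall_map_eq
    (f := dotProductEquiv ℝ (Fin n) p) hM.ne' ?_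
  rintro _ ⟨t, ht, rfl⟩
  exact (dotProduct_signedMomentVec_self φ p t).trans ht

theorem exists_supNorm_polyEval_add_smul_lt [CompactSpace Q] [Nonempty Q]
    (hcont : ∀ i, Continuous (φ i)) {p g : Fin n → ℝ}
    (h : ∀ t, |polyEval φ p t| = supNorm (polyEval φ p) → polyEval φ p t * polyEval φ g t < 0) :
    ∃ ε : ℝ, supNorm (polyEval φ (p + ε • g)) < supNorm (polyEval φ p) := by
  obtain ⟨ε, -, hε⟩ := ContinuousMap.exists_norm_add_smul_lt
    (f := ⟨_, continuous_polyEval hcont p⟩) (g := ⟨_, continuous_polyEval hcont g⟩)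
    (by simpa [← supNorm_eq_norm] using h)
  refine ⟨ε, ?_⟩
  simpa [polyEval_add_smul, ← supNorm_eq_norm] using hε

theorem supNorm_le_of_eq_sum_smul_signedMomentVec [CompactSpace Q]
    (hcont : ∀ i, Continuous (φ i)) {p q ℓ : Fin n → ℝ} (hp : ℓ ⬝ᵥ p = 1) (hq : ℓ ⬝ᵥ q = 1)
    {N : ℕ} {ts : Fin N → Q} (hts : ∀ i, |polyEval φ p (ts i)| = supNorm (polyEval φ p))
    {c : Fin N → ℝ} (hc : ∀ i, 0 ≤ c i) (hℓ : ℓ = ∑ i, c i • signedMomentVec φ p (ts i)) :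
    supNorm (polyEval φ p) ≤ supNorm (polyEval φ q) := by
  have hpc := sum_smul_signedMomentVec_dotProduct_self φ p hts c
  have hqc := sum_smul_signedMomentVec_dotProduct_le hcont p q ts hc
  rw [← hℓ, hp] at hpc
  rw [← hℓ, hq] at hqc
  have hS : 0 < ∑ i, c i :=
    pos_of_mul_pos_left (hpc ▸ one_pos) (supNorm_nonneg (polyEval φ p))
  exact le_of_mul_le_mul_left (hpc ▸ hqc) hS

end Alternance

theorem least_deviation_iff_alternance_general {Q : Type*} [MetricSpace Q] [CompactSpace Q]
    {n : ℕ} (φ : Fin n → Q → ℝ) (hcont : ∀ i, Continuous (φ i))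
    (hli : LinearIndependent ℝ φ)
    (ℓ : Fin n → ℝ)
    (p : Fin n → ℝ) (hp : ℓ ⬝ᵥ p = 1) :
    (∀ q : Fin n → ℝ, ℓ ⬝ᵥ q = 1 → supNorm (polyEval φ p) ≤ supNorm (polyEval φ q)) ↔
      ∃ (N : ℕ), N ≤ n ∧ ∃ ts : Fin N → Q,
        (∀ i, |polyEval φ p (ts i)| = supNorm (polyEval φ p)) ∧
        ∃ c : Fin N → ℝ, (∀ i, 0 ≤ c i) ∧
          (ℓ = ∑ i, c i • Real.sign (polyEval φ p (ts i)) • momentVec φ (ts i) ∨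
           -ℓ = ∑ i, c i • Real.sign (polyEval φ p (ts i)) • momentVec φ (ts i)) := by
  constructor
  · intro hopt
    by_contra hno
    obtain ⟨t₀, ht₀⟩ := exists_polyEval_ne_zero hli (p := p) (by rintro rfl; simp at hp)
    have : Nonempty Q := ⟨t₀⟩
    have hM : 0 < supNorm (polyEval φ p) :=
      (abs_pos.mpr ht₀).trans_le (abs_le_supNorm (continuous_polyEval hcont p) t₀)
    by_cases hmem : supNorm (polyEval φ p) • ℓ ∈ convexHull ℝ (extremalMoments φ p)
    · obtain ⟨N, hN, ts, hts, c, hc, hℓ⟩ := exists_alternance_of_smul_mem_convexHull hM hmem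
      exact hno ⟨N, hN, ts, hts, c, hc, Or.inl hℓ⟩
    · obtain ⟨g, hℓg, hg⟩ := exists_descent_of_smul_notMem_convexHull hp hM
        (isCompact_convexHull_extremalMoments hcont hM).isClosed hmem
      obtain ⟨ε, hε⟩ := exists_supNorm_polyEval_add_smul_lt hcont hg
      refine hε.not_ge (hopt _ ?_)
      rw [dotProduct_add, dotProduct_smul, hp, hℓg, smul_zero, add_zero]
  · rintro ⟨N, -, ts, hts, c, hc, hℓ | hℓ⟩ q hq
    · exact supNorm_le_of_eq_sum_smul_signedMomentVec hcont hp hq hts hc hℓ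
    · exact absurd hℓ (neg_ne_sum_smul_signedMomentVec hp hts hc)

/-- (Alternance theorem) A polynomial `p ∈ 𝒫` with `ℓ(p) = 1` has least deviation from zero
iff it possesses an alternance of at most `n` points: points `t₁,…,t_N ∈ Q`, `N ≤ n`, with
`|p(tᵢ)| = ‖p‖_{C(Q)}`, such that the conic hull of the vectors `a(tᵢ) = sign(p(tᵢ))·u(tᵢ)`
(the set of their nonnegative linear combinations) contains `ℓ` or `−ℓ`. -/
theorem least_deviation_iff_alternance {Q : Type*} [MetricSpace Q] [CompactSpace Q]
    {n : ℕ} (φ : Fin n → Q → ℝ) (hcont : ∀ i, Continuous (φ i))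
    (hli : LinearIndependent ℝ φ)
    (ℓ : Fin n → ℝ) (hℓ : ℓ ≠ 0)
    (p : Fin n → ℝ) (hp : ℓ ⬝ᵥ p = 1) :
    (∀ q : Fin n → ℝ, ℓ ⬝ᵥ q = 1 → supNorm (polyEval φ p) ≤ supNorm (polyEval φ q)) ↔
      ∃ (N : ℕ), N ≤ n ∧ ∃ ts : Fin N → Q,
        (∀ i, |polyEval φ p (ts i)| = supNorm (polyEval φ p)) ∧
        ∃ c : Fin N → ℝ, (∀ i, 0 ≤ c i) ∧
          (ℓ = ∑ i, c i • Real.sign (polyEval φ p (ts i)) • momentVec φ (ts i) ∨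
           -ℓ = ∑ i, c i • Real.sign (polyEval φ p (ts i)) • momentVec φ (ts i)) :=
  least_deviation_iff_alternance_general φ hcont hli ℓ p hp
end
end

section
/- (One-step estimate for the modified Remez iteration) Let a₁,…,aₙ be a basis of ℝⁿ, ℓ, a₀ ∈ ℝⁿ, σ ∈ {−1,1}, and suppose σℓ = Σᵢ₌₁ⁿ αᵢaᵢ with all αᵢ > 0 and a₀ = Σᵢ₌₁ⁿ sᵢaᵢ. Let q be an index maximizing sᵢ/αᵢ over i = 1,…,n, and assume s_q > 0. Set γ₀ = α_q/s_q, γⱼ = αⱼ − α_q sⱼ/s_q for j ∈ {1,…,n}\{q}, and Γ = γ₀ + Σ_{j≠q} γⱼ. Let p_k, p_{k+1} ∈ ℝⁿ and b_k, b_{k+1}, r_k, B_k ∈ ℝ satisfy ⟨p_k, ℓ⟩ = ⟨p_{k+1}, ℓ⟩ = 1, ⟨p_k, aᵢ⟩ = b_k for i = 1,…,n, ⟨p_k, a₀⟩ = r_k, and ⟨p_{k+1}, aᵢ⟩ = b_{k+1} for all i ∈ {0,1,…,n}\{q}. Then all γⱼ ≥ 0, γ₀ > 0, the identity γ₀(r_k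 − b_k) = Γ(b_{k+1} − b_k) holds, and, setting B_{k+1} = min(B_k, r_k), one has B_{k+1} − b_{k+1} ≤ (1 − γ₀/Γ)(B_k − b_k). -/
open Matrix Finset

noncomputable section

/-- (One-step estimate for the modified Remez iteration.) Purely linear-algebraic assertion
about the data of the `k`-th iteration of the modified Remez algorithm. -/
theorem remez_step_estimate {n : ℕ}
    (a : Fin n → Fin n → ℝ) (ha : LinearIndependent ℝ a)
    (ℓ a₀ : Fin n → ℝ) (σ : ℝ) (hσ : σ = 1 ∨ σ = -1)
    (α s : Fin n → ℝ) (hα : ∀ i, 0 < α i)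
    (hℓ : σ • ℓ = ∑ i, α i • a i) (ha₀ : a₀ = ∑ i, s i • a i)
    (q : Fin n) (hq : ∀ i, s i / α i ≤ s q / α q) (hsq : 0 < s q)
    (pk pk1 : Fin n → ℝ) (bk bk1 rk Bk : ℝ)
    (hpkℓ : pk ⬝ᵥ ℓ = 1) (hpk1ℓ : pk1 ⬝ᵥ ℓ = 1)
    (hpka : ∀ i, pk ⬝ᵥ a i = bk) (hpka₀ : pk ⬝ᵥ a₀ = rk)
    (hpk1a : ∀ i, i ≠ q → pk1 ⬝ᵥ a i = bk1) (hpk1a₀ : pk1 ⬝ᵥ a₀ = bk1) :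
    (∀ j, j ≠ q → 0 ≤ α j - α q * s j / s q) ∧
    0 < α q / s q ∧
    (α q / s q) * (rk - bk) =
      (α q / s q + ∑ j ∈ univ.erase q, (α j - α q * s j / s q)) * (bk1 - bk) ∧
    min Bk rk - bk1 ≤
      (1 - (α q / s q) / (α q / s q + ∑ j ∈ univ.erase q, (α j - α q * s j / s q)))
        * (Bk - bk) := by
  have hsq' : s q ≠ 0 := hsq.ne'
  have hαq := hα q
  -- part 1
  have h1 : ∀ j, j ≠ q → 0 ≤ α j - α q * s j / s q := by
    intro j _
    have h := hq j
    have hαj := hα j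
    rw [div_le_div_iff₀ hαj hαq] at h
    rw [sub_nonneg, div_le_iff₀ hsq]
    nlinarith
  have h0 : 0 < α q / s q := div_pos hαq hsq
  -- generic dot product with linear combination
  have dot_sum : ∀ (v c : Fin n → ℝ),
      v ⬝ᵥ (∑ i, c i • a i) = ∑ i, c i * (v ⬝ᵥ a i) := by
    intro v c
    simp only [dotProduct, Finset.sum_apply, Pi.smul_apply, smul_eq_mul, Finset.mul_sum]
    rw [Finset.sum_comm]
    refine Finset.sum_congr rfl fun i _ => ?_
    refine Finset.sum_congr rfl fun j _ => by ring
  set Sαe := ∑ j ∈ univ.erase q, α j with hSαe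
  set Sse := ∑ j ∈ univ.erase q, s j with hSse
  set c := pk1 ⬝ᵥ a q with hc
  have hmem : q ∈ (univ : Finset (Fin n)) := mem_univ q
  -- E1 : bk * (α q + Sαe) = σ
  have hE1 : bk * (α q + Sαe) = σ := by
    have h : pk ⬝ᵥ (σ • ℓ) = σ := by rw [dotProduct_smul, hpkℓ]; simp
    rw [hℓ, dot_sum, ← Finset.add_sum_erase _ _ hmem] at h
    simp only [hpka] at h
    rw [← Finset.sum_mul] at h
    linear_combination h
  -- E2 : α q * c + Sαe * bk1 = σ
  have hE2 : α q * c + Sαe * bk1 = σ := by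
    have h : pk1 ⬝ᵥ (σ • ℓ) = σ := by rw [dotProduct_smul, hpk1ℓ]; simp
    rw [hℓ, dot_sum, ← Finset.add_sum_erase _ _ hmem] at h
    rw [Finset.sum_congr rfl (fun j hj => by
      rw [hpk1a j (Finset.ne_of_mem_erase hj)])] at h
    rw [← Finset.sum_mul] at h
    linear_combination h
  -- E3 : bk * (s q + Sse) = rk
  have hE3 : bk * (s q + Sse) = rk := by
    have h := hpka₀
    rw [ha₀, dot_sum, ← Finset.add_sum_erase _ _ hmem] at h
    simp only [hpka] at h
    rw [← Finset.sum_mul] at h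
    linear_combination h
  -- E4 : s q * c + Sse * bk1 = bk1
  have hE4 : s q * c + Sse * bk1 = bk1 := by
    have h := hpk1a₀
    rw [ha₀, dot_sum, ← Finset.add_sum_erase _ _ hmem] at h
    rw [Finset.sum_congr rfl (fun j hj => by
      rw [hpk1a j (Finset.ne_of_mem_erase hj)])] at h
    rw [← Finset.sum_mul] at h
    linear_combination h
  -- sum of gammas over erase q
  have hΓ : ∑ j ∈ univ.erase q, (α j - α q * s j / s q) = Sαe - (α q / s q) * Sse := by
    rw [Finset.sum_sub_distrib, hSαe, hSse, Finset.mul_sum]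
    congr 1
    refine Finset.sum_congr rfl fun j _ => by ring
  -- key identity
  have key : α q * (rk - bk) = (α q + s q * Sαe - α q * Sse) * (bk1 - bk) := by
    linear_combination s q * hE1 - s q * hE2 - (α q) * hE3 + (α q) * hE4
  have key' : (α q / s q) * (rk - bk) =
      (α q / s q + ∑ j ∈ univ.erase q, (α j - α q * s j / s q)) * (bk1 - bk) := by
    rw [hΓ]
    field_simp
    linear_combination key
  refine ⟨h1, h0, key', ?_⟩
  -- final inequality
  set G := α q / s q + ∑ j ∈ univ.erase q, (α j - α q * s j / s q) with hG
  have hsumnn : 0 ≤ ∑ j ∈ univ.erase q, (α j - α q * s j / s q) :=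
    Finset.sum_nonneg fun j hj => h1 j (Finset.ne_of_mem_erase hj)
  have hGpos : 0 < G := by positivity
  have ht1 : (α q / s q) / G ≤ 1 := by
    rw [div_le_one hGpos]; linarith
  have ht0 : 0 < (α q / s q) / G := div_pos h0 hGpos
  have hb : bk1 - bk = ((α q / s q) / G) * (rk - bk) := by
    rw [div_mul_eq_mul_div, eq_div_iff hGpos.ne']
    linear_combination -key'
  rcases le_total rk Bk with h | h
  · rw [min_eq_right h]
    nlinarith [mul_nonneg (sub_nonneg.2 ht1) (sub_nonneg.2 h)]
  · rw [min_eq_left h]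
    nlinarith [mul_nonneg ht0.le (sub_nonneg.2 h)]
end
end
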